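/- Let D be a digraph, X a set of vertices of D, and ℓ a positive integer. Then either D contains ℓ directed odd X-walks such that every vertex of D is used at most twice in total across all the walks (counting multiplicity of occurrence), or there is a set Y of at most ℓ−1 vertices of D such that D−Y contains no directed odd X-walk. -/

import Mathlib

variable {V : Type}

/-- `w` is a directed walk of length `n` in the digraph with edge relation `R`. -/
def IsWalkOn (R : V → V → Prop) (w : ℕ → V) (n : ℕ) : Prop :=
  ∀ i < n, R (w i) (w (i + 1))

/-- The set of vertices used by the walk `w` of length `n`. -/
def walkVerts (w : ℕ → V) (n : ℕ) : Set V :=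
  {v | ∃ i ≤ n, w i = v}

/-- The set of directed edges used by the walk `w` of length `n`. -/
def walkEdges (w : ℕ → V) (n : ℕ) : Set (V × V) :=
  {e | ∃ i < n, w i = e.1 ∧ w (i + 1) = e.2}

/-- A directed path: a walk with no repeated vertices. -/
def IsPathOn (R : V → V → Prop) (w : ℕ → V) (n : ℕ) : Prop :=
  IsWalkOn R w n ∧ ∀ i ≤ n, ∀ j ≤ n, w i = w j → i = j

/-- A directed cycle of length `n`: a closed walk with no repeated vertices
except that the last vertex equals the first. -/
def IsCycleOn (R : V → V → Prop) (w : ℕ → V) (n : ℕ) : Prop :=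
  0 < n ∧ IsWalkOn R w n ∧ w n = w 0 ∧ ∀ i < n, ∀ j < n, w i = w j → i = j

/-- `v` is reachable from `u` by a directed walk all of whose vertices lie in `S`. -/
def ReachIn (R : V → V → Prop) (S : Set V) (u v : V) : Prop :=
  ∃ w n, IsWalkOn R w n ∧ w 0 = u ∧ w n = v ∧ ∀ i ≤ n, w i ∈ S

/-- Every two vertices of `C` are mutually reachable inside `S`. -/
def StrongIn (R : V → V → Prop) (S C : Set V) : Prop :=
  ∀ u ∈ C, ∀ v ∈ C, ReachIn R S u v

/-- `C` is a strongly connected component of the subgraph induced on `S`. -/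
def IsSCCOf (R : V → V → Prop) (S C : Set V) : Prop :=
  C.Nonempty ∧ C ⊆ S ∧ StrongIn R S C ∧
    ∀ C', C ⊆ C' → C' ⊆ S → StrongIn R S C' → C' = C

/-- A directed `X`-walk: endpoints in `X`, all internal vertices outside `X`. -/
def IsXWalk (R : V → V → Prop) (X : Set V) (w : ℕ → V) (n : ℕ) : Prop :=
  IsWalkOn R w n ∧ w 0 ∈ X ∧ w n ∈ X ∧ ∀ i, 0 < i → i < n → w i ∉ X

/-- `S` meets every directed odd cycle. -/
def HitsOdd (R : V → V → Prop) (S : Set V) : Prop :=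
  ∀ c m, IsCycleOn R c m → Odd m → ∃ i < m, c i ∈ S

/-- `S` meets every directed odd cycle of the subgraph induced on `W`. -/
def HitsOddIn (R : V → V → Prop) (S W : Set V) : Prop :=
  ∀ c m, IsCycleOn R c m → Odd m → walkVerts c m ⊆ W → ∃ i < m, c i ∈ S

/-- A half-integral packing of `k` directed odd cycles: every vertex lies in at most
two of the `k` cycles. -/
def HalfPackOdd (R : V → V → Prop) (k : ℕ) : Prop :=
  ∃ (c : Fin k → ℕ → V) (len : Fin k → ℕ),
    (∀ i, IsCycleOn R (c i) (len i) ∧ Odd (len i)) ∧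
    ∀ v, {i | v ∈ walkVerts (c i) (len i)}.ncard ≤ 2

/-- A linkage of order `s` from `A` to `B` avoiding `Z`: `s` pairwise vertex-disjoint
directed paths from `A` to `B`, none of which meets `Z`. -/
def ExLinkage (R : V → V → Prop) (A B Z : Set V) (s : ℕ) : Prop :=
  ∃ (P : Fin s → ℕ → V) (len : Fin s → ℕ),
    (∀ i, IsPathOn R (P i) (len i) ∧ P i 0 ∈ A ∧ P i (len i) ∈ B ∧
      Disjoint (walkVerts (P i) (len i)) Z) ∧
    ∀ i j, i ≠ j → Disjoint (walkVerts (P i) (len i)) (walkVerts (P j) (len j))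

/-- `T` is `r`-well-linked: for all disjoint equal-size subsets `A, B ⊆ T` of size at
least `r`, there are linkages of order `|A|` from `A` to `B` and from `B` to `A` in
`G - (T \ (A ∪ B))`. -/
def WellLinked (R : V → V → Prop) (T : Finset V) (r : ℕ) : Prop :=
  ∀ A B : Finset V, A ⊆ T → B ⊆ T → Disjoint A B → A.card = B.card → r ≤ A.card →
    ExLinkage R (↑A) (↑B) ((↑T : Set V) \ (↑A ∪ ↑B)) A.card ∧
    ExLinkage R (↑B) (↑A) ((↑T : Set V) \ (↑A ∪ ↑B)) A.card

/-- `S` is `k`-linked: for every vertex set `X` with `|X| < k`, there is a unique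
strongly connected component of `G - X` containing more than half of the vertices
of `S`. -/
def KLinked (R : V → V → Prop) (S : Finset V) (k : ℕ) : Prop :=
  ∀ X : Finset V, X.card < k →
    ∃! C : Set V, IsSCCOf R ((↑X : Set V)ᶜ) C ∧ S.card < 2 * ((↑S : Set V) ∩ C).ncard

/-- A bramble: a family of (vertex sets of) strongly connected subgraphs which
pairwise either intersect or are joined by edges in both directions. -/
def IsBramble (R : V → V → Prop) (B : Set (Set V)) : Prop :=
  (∀ C ∈ B, C.Nonempty ∧ StrongIn R C C) ∧
  ∀ C₁ ∈ B, ∀ C₂ ∈ B, (C₁ ∩ C₂).Nonempty ∨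
    ((∃ u ∈ C₁, ∃ v ∈ C₂, R u v) ∧ (∃ u ∈ C₂, ∃ v ∈ C₁, R u v))

/-- A walk in the underlying undirected graph of the digraph with edge relation `R`. -/
def IsUWalkOn (R : V → V → Prop) (w : ℕ → V) (n : ℕ) : Prop :=
  ∀ i < n, R (w i) (w (i + 1)) ∨ R (w (i + 1)) (w i)

/-- A separation `(C, D)` of a digraph: `C ∪ D = V` and there is no edge from
`C \ D` to `D \ C`. -/
def IsSeparation (R : V → V → Prop) (C D : Set V) : Prop :=
  C ∪ D = Set.univ ∧ ∀ u ∈ C \ D, ∀ v ∈ D \ C, ¬ R u v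

/-!
Odd `X`-walks of `R` are the projections of the walks from `X ×ˢ {false}` to `X ×ˢ {true}` in
the parity cover `oddCover R X`, and vertex-disjoint walks of the cover use every vertex of `V`
at most twice, once in each layer. The theorem is therefore Menger's theorem in the cover.
Menger's theorem is proved with unit flows in the split digraph, where every vertex becomes an
entry and an exit copy joined by an arc: a flow of value `k` either admits an augmenting path,
or the vertices whose entry copy but not exit copy is reachable in the residual digraph form a
separator of size at most `k`.
-/

open Finset

section Walks

variable {α : Type} {r : α → α → Prop} {w w' : ℕ → α} {n n' i j : ℕ}

theorem exists_isWalkOn_of_reflTransGen {x y : α} (h : Relation.ReflTransGen r x y) :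
    ∃ w n, IsWalkOn r w n ∧ w 0 = x ∧ w n = y := by
  induction h with
  | refl => exact ⟨fun _ => x, 0, fun i hi => absurd hi (Nat.not_lt_zero i), rfl, rfl⟩
  | @tail b c _ hbc ih =>
    obtain ⟨w, n, hw, hw0, hwn⟩ := ih
    refine ⟨fun i => if i ≤ n then w i else c, n + 1, fun i hi => ?_, by simp [hw0], by simp⟩
    rcases Nat.lt_or_eq_of_le (Nat.le_of_lt_succ hi) with hi | rfl
    · simpa [hi.le, Nat.succ_le_of_lt hi] using hw i hi
    · simpa [hwn] using hbc

theorem IsWalkOn.drop (hw : IsWalkOn r w n) (i : ℕ) :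
    IsWalkOn r (fun k => w (k + i)) (n - i) := fun k hk => by
  simpa [Nat.add_right_comm] using hw (k + i) (by omega)

theorem IsWalkOn.splice (hw : IsWalkOn r w n) (hij : i ≤ j) (hjn : j ≤ n) (h : w i = w j) :
    IsWalkOn r (fun k => if k ≤ i then w k else w (k + (j - i))) (n - (j - i)) := by
  intro k hk
  by_cases hki : k < i
  · simpa [hki.le, Nat.succ_le_of_lt hki] using hw k (by omega)
  by_cases hk' : k = i
  · subst hk'
    simpa [h, show k + 1 + (j - k) = j + 1 by omega] using hw j (by omega)
  · simpa [show ¬k ≤ i by omega, show ¬k + 1 ≤ i by omega, Nat.add_right_comm]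
      using hw (k + (j - i)) (by omega)

/-- A shortest walk from `s` to `t` is a path meeting `s` only at its start. -/
theorem IsWalkOn.exists_isPathOn {s t : Set α} (hw : IsWalkOn r w n) (h0 : w 0 ∈ s)
    (hn : w n ∈ t) :
    ∃ p m, IsPathOn r p m ∧ p 0 ∈ s ∧ p m ∈ t ∧
      ∀ i, 0 < i → i ≤ m → p i ∉ s := by
  classical
  have hex : ∃ m, ∃ p, IsWalkOn r p m ∧ p 0 ∈ s ∧ p m ∈ t := ⟨n, w, hw, h0, hn⟩
  obtain ⟨p, hp, hp0, hpm⟩ := Nat.find_spec hex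
  set m := Nat.find hex
  refine ⟨p, m, ⟨hp, fun i hi j hj hij => ?_⟩, hp0, hpm, fun i hi0 him hpi => ?_⟩
  · wlog hle : i ≤ j generalizing i j
    · exact (this j hj i hi hij.symm (by omega)).symm
    by_contra hne
    refine Nat.find_min hex (m := m - (j - i)) (by omega)
      ⟨_, hp.splice hle hj hij, by simpa using hp0, ?_⟩
    by_cases hmi : m - (j - i) ≤ i
    · rw [if_pos hmi, show m - (j - i) = i by omega, hij, show j = m by omega]
      exact hpm
    · simpa [hmi, show m - (j - i) + (j - i) = m by omega] using hpm
  · exact Nat.find_min hex (m := m - i) (by omega) ⟨_, hp.drop i, by simpa using hpi,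
      by simpa [show m - i + i = m by omega] using hpm⟩

theorem IsWalkOn.apply_zero_eq_of_apply_eq (hr : ∀ x y z, r y x → r z x → y = z)
    (hw : IsWalkOn r w n) (hw' : IsWalkOn r w' n') (hin : i ≤ n) (hjn : j ≤ n') (hij : i ≤ j)
    (h : w i = w' j) : w 0 = w' (j - i) := by
  induction i generalizing j with
  | zero => simpa using h
  | succ i ih =>
    have hstep : r (w' (j - 1)) (w (i + 1)) := by
      simpa [h, show j - 1 + 1 = j by omega] using hw' (j - 1) (by omega)
    have := hr _ _ _ (hw i (by omega)) hstep
    simpa [show j - 1 - i = j - (i + 1) by omega] using ih (by omega) (by omega) (by omega) this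

theorem IsWalkOn.eq_of_apply_eq (hr : ∀ x y z, r y x → r z x → y = z) (hw : IsWalkOn r w n)
    (hw' : IsWalkOn r w' n') (h₀ : ∀ y, ¬ r y (w 0)) (h₀' : ∀ y, ¬ r y (w' 0))
    (hi : i ≤ n) (hj : j ≤ n') (h : w i = w' j) : i = j ∧ w 0 = w' 0 := by
  wlog hij : i ≤ j generalizing w w' n n' i j
  · exact ⟨(this hw' hw h₀' h₀ hj hi h.symm (by omega)).1.symm,
      (this hw' hw h₀' h₀ hj hi h.symm (by omega)).2.symm⟩
  have h' := hw.apply_zero_eq_of_apply_eq hr hw' hi hj hij h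
  rcases Nat.eq_zero_or_pos (j - i) with hji | hji
  · exact ⟨by omega, by rwa [hji] at h'⟩
  · have hstep := hw' (j - i - 1) (by omega)
    rw [show j - i - 1 + 1 = j - i by omega, ← h'] at hstep
    exact (h₀ _ hstep).elim

theorem IsWalkOn.isPathOn_of_forall_not_rel (hr : ∀ x y z, r y x → r z x → y = z)
    (hw : IsWalkOn r w n) (h₀ : ∀ y, ¬ r y (w 0)) : IsPathOn r w n :=
  ⟨hw, fun _ hi _ hj h => (hw.eq_of_apply_eq hr hw h₀ h₀ hi hj h).1⟩

theorem IsWalkOn.snd_eq_decide_odd {r : α × Bool → α × Bool → Prop}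
    (hr : ∀ x y, r x y → y.2 = !x.2) {w : ℕ → α × Bool} (hw : IsWalkOn r w n)
    (h0 : (w 0).2 = false) : ∀ t ≤ n, (w t).2 = decide (Odd t) := by
  intro t ht
  induction t with
  | zero => simpa using h0
  | succ t ih =>
    rw [hr _ _ (hw t ht), ih (by omega)]
    by_cases h : Odd t <;> simp [h, Nat.odd_add_one]

end Walks

section UnitFlow

variable {α : Type} [DecidableEq α]

def outDeg (F : Finset (α × α)) (x : α) : ℕ := #{e ∈ F | e.1 = x}

def inDeg (F : Finset (α × α)) (x : α) : ℕ := #{e ∈ F | e.2 = x}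

/-- A flow of unit arc capacities from `s` to `t` in the digraph `G`, given by its
support `F`. -/
structure IsFlow (G : α → α → Prop) (s t : Set α) (F : Finset (α × α)) : Prop where
  isArc : ∀ e ∈ F, G e.1 e.2
  conserve : ∀ x, x ∉ s → x ∉ t → outDeg F x = inDeg F x

def flowValue (s : Set α) [DecidablePred (· ∈ s)] (F : Finset (α × α)) : ℕ :=
  #{e ∈ F | e.1 ∈ s}

def Residual (G : α → α → Prop) (F : Finset (α × α)) (x y : α) : Prop :=
  (G x y ∧ (x, y) ∉ F) ∨ (y, x) ∈ F

def residualReach (G : α → α → Prop) (s : Set α) (F : Finset (α × α)) : Set α :=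
  {y | ∃ x ∈ s, Relation.ReflTransGen (Residual G F) x y}

variable {G : α → α → Prop} {s t : Set α} {F : Finset (α × α)}

theorem IsFlow.isWalkOn (hF : IsFlow G s t F) {q : ℕ → α} {m : ℕ}
    (hq : IsWalkOn (fun x y => (x, y) ∈ F) q m) : IsWalkOn G q m :=
  fun i hi => hF.isArc _ (hq i hi)

theorem card_filter_sdiff_union_add {R D : Finset (α × α)} (hR : R ⊆ F) (hD : Disjoint D F)
    (P : α × α → Prop) [DecidablePred P] :
    #{e ∈ F \ R ∪ D | P e} + #{e ∈ R | P e} = #{e ∈ F | P e} + #{e ∈ D | P e} := by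
  rw [filter_union,
    card_union_of_disjoint (disjoint_filter_filter (hD.symm.mono_left sdiff_subset)),
    add_right_comm, ← card_union_of_disjoint (disjoint_filter_filter disjoint_sdiff_self_left),
    ← filter_union, sdiff_union_of_subset hR]

end UnitFlow

section Augment

variable {α : Type} [DecidableEq α] {G : α → α → Prop} {s t : Set α}
  {F : Finset (α × α)} {p : ℕ → α} {n : ℕ}

def pathRev (F : Finset (α × α)) (p : ℕ → α) (n : ℕ) : Finset (α × α) :=
  {i ∈ range n | (p (i + 1), p i) ∈ F}.image fun i => (p (i + 1), p i)

def pathFwd (F : Finset (α × α)) (p : ℕ → α) (n : ℕ) : Finset (α × α) :=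
  {i ∈ range n | (p (i + 1), p i) ∉ F}.image fun i => (p i, p (i + 1))

/-- The flow obtained by pushing one unit along the residual path `p`. -/
def augmentAlong (F : Finset (α × α)) (p : ℕ → α) (n : ℕ) : Finset (α × α) :=
  F \ pathRev F p n ∪ pathFwd F p n

theorem pathRev_subset : pathRev F p n ⊆ F := by
  intro e he
  obtain ⟨i, hi, rfl⟩ := mem_image.mp he
  exact (mem_filter.mp hi).2

theorem isArc_of_mem_pathFwd (hp : IsWalkOn (Residual G F) p n) {e : α × α}
    (he : e ∈ pathFwd F p n) : G e.1 e.2 ∧ e ∉ F := by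
  obtain ⟨i, hi, rfl⟩ := mem_image.mp he
  rw [mem_filter, mem_range] at hi
  exact (hp i hi.1).resolve_right hi.2

theorem card_filter_pathRev (hp : IsPathOn (Residual G F) p n) (P : α × α → Prop)
    [DecidablePred P] :
    #{e ∈ pathRev F p n | P e} =
      #{i ∈ range n | (p (i + 1), p i) ∈ F ∧ P (p (i + 1), p i)} := by
  rw [pathRev, filter_image, card_image_of_injOn, filter_filter]
  intro i hi j hj hij
  replace hi := mem_range.mp (mem_of_mem_filter _ (mem_of_mem_filter _ (mem_coe.mp hi)))
  replace hj := mem_range.mp (mem_of_mem_filter _ (mem_of_mem_filter _ (mem_coe.mp hj)))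
  exact hp.2 i (by omega) j (by omega) (congrArg Prod.snd hij)

theorem card_filter_pathFwd (hp : IsPathOn (Residual G F) p n) (P : α × α → Prop)
    [DecidablePred P] :
    #{e ∈ pathFwd F p n | P e} =
      #{i ∈ range n | (p (i + 1), p i) ∉ F ∧ P (p i, p (i + 1))} := by
  rw [pathFwd, filter_image, card_image_of_injOn, filter_filter]
  intro i hi j hj hij
  replace hi := mem_range.mp (mem_of_mem_filter _ (mem_of_mem_filter _ (mem_coe.mp hi)))
  replace hj := mem_range.mp (mem_of_mem_filter _ (mem_of_mem_filter _ (mem_coe.mp hj)))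
  exact hp.2 i (by omega) j (by omega) (congrArg Prod.fst hij)

theorem card_filter_not_add_card_filter {ι : Type} [DecidableEq ι] (S : Finset ι)
    (b P : ι → Prop) [DecidablePred b] [DecidablePred P] :
    #{i ∈ S | ¬ b i ∧ P i} + #{i ∈ S | b i ∧ P i} = #{i ∈ S | P i} := by
  rw [← card_union_of_disjoint (disjoint_filter.mpr fun _ _ h h' => h.1 h'.1), ← filter_or]
  congr 1
  exact filter_congr fun i _ => by tauto

/-- Whichever way `p` uses each of its arcs, at an interior vertex `p` enters and leaves once. -/
theorem outDeg_pathFwd_add_inDeg_pathRev (hp : IsPathOn (Residual G F) p n) (x : α) :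
    outDeg (pathFwd F p n) x + inDeg (pathRev F p n) x = #{i ∈ range n | p i = x} := by
  rw [outDeg, inDeg, card_filter_pathFwd hp, card_filter_pathRev hp]
  dsimp only
  convert card_filter_not_add_card_filter (range n) (fun i => (p (i + 1), p i) ∈ F)
    (fun i => p i = x)

theorem inDeg_pathFwd_add_outDeg_pathRev (hp : IsPathOn (Residual G F) p n) (x : α) :
    inDeg (pathFwd F p n) x + outDeg (pathRev F p n) x = #{i ∈ range n | p (i + 1) = x} := by
  rw [outDeg, inDeg, card_filter_pathFwd hp, card_filter_pathRev hp]
  dsimp only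
  convert card_filter_not_add_card_filter (range n) (fun i => (p (i + 1), p i) ∈ F)
    (fun i => p (i + 1) = x)

theorem card_filter_range_eq_of_ne (x : α) (h0 : p 0 ≠ x) (hn : p n ≠ x) :
    #{i ∈ range n | p i = x} = #{i ∈ range n | p (i + 1) = x} := by
  have h := (sum_range_succ (fun i => if p i = x then 1 else 0) n).symm.trans
    (sum_range_succ' (fun i => if p i = x then 1 else 0) n)
  simp only [h0, hn, if_false, add_zero] at h
  simpa only [card_filter] using h

theorem IsFlow.augment (hF : IsFlow G s t F) (hp : IsPathOn (Residual G F) p n)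
    (h0 : p 0 ∈ s) (hn : p n ∈ t) : IsFlow G s t (augmentAlong F p n) := by
  have hR : pathRev F p n ⊆ F := pathRev_subset
  have hD : Disjoint (pathFwd F p n) F :=
    disjoint_left.mpr fun _ he => (isArc_of_mem_pathFwd hp.1 he).2
  refine ⟨fun e he => ?_, fun x hxs hxt => ?_⟩
  · rcases mem_union.mp he with he | he
    · exact hF.isArc e (mem_sdiff.mp he).1
    · exact (isArc_of_mem_pathFwd hp.1 he).1
  · have hout := card_filter_sdiff_union_add hR hD (·.1 = x)
    have hin := card_filter_sdiff_union_add hR hD (·.2 = x)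
    have h1 := outDeg_pathFwd_add_inDeg_pathRev hp x
    have h2 := inDeg_pathFwd_add_outDeg_pathRev hp x
    have h3 := card_filter_range_eq_of_ne x (fun h => hxs (h ▸ h0)) (fun h => hxt (h ▸ hn))
    have h4 := hF.conserve x hxs hxt
    simp only [outDeg, inDeg, augmentAlong] at *
    omega

theorem flowValue_augmentAlong [DecidablePred (· ∈ s)] (hs : ∀ x y, G x y → y ∉ s)
    (hst : Disjoint s t) (hF : IsFlow G s t F) (hp : IsPathOn (Residual G F) p n)
    (h0 : p 0 ∈ s) (hn : p n ∈ t) (hint : ∀ i, 0 < i → i ≤ n → p i ∉ s) :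
    flowValue s (augmentAlong F p n) = flowValue s F + 1 := by
  have hR : pathRev F p n ⊆ F := pathRev_subset
  have hD : Disjoint (pathFwd F p n) F :=
    disjoint_left.mpr fun _ he => (isArc_of_mem_pathFwd hp.1 he).2
  have h := card_filter_sdiff_union_add hR hD (·.1 ∈ s)
  have hn0 : 0 < n := Nat.pos_of_ne_zero fun h => hst.ne_of_mem h0 hn (by rw [h])
  have hrev : #{e ∈ pathRev F p n | e.1 ∈ s} = 0 := by
    rw [card_filter_pathRev hp, card_eq_zero, filter_eq_empty_iff]
    exact fun i hi h => hint (i + 1) (by omega) (by simp at hi; omega) h.2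
  have hfwd : #{e ∈ pathFwd F p n | e.1 ∈ s} = 1 := by
    rw [card_filter_pathFwd hp, card_eq_one]
    refine ⟨0, eq_singleton_iff_unique_mem.mpr ⟨?_, fun i hi => ?_⟩⟩
    · simp only [mem_filter, mem_range]
      exact ⟨hn0, fun h => hs _ _ (hF.isArc _ h) h0, h0⟩
    · simp only [mem_filter, mem_range] at hi
      by_contra hi0
      exact hint i (by omega) (by omega) hi.2.2
  rw [flowValue, flowValue, augmentAlong]
  omega

end Augment

section MaximalPath

variable {α : Type} {F : Finset (α × α)}

/-- Follow arcs of `F` from `x₀` for as long as possible: as no vertex has two incoming arcs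
and `x₀` has none, no vertex repeats, so the finiteness of `F` stops the walk. -/
theorem exists_maximal_isPathOn (hF : ∀ x y z, (y, x) ∈ F → (z, x) ∈ F → y = z)
    {x₀ : α} (h₀ : ∀ y, (y, x₀) ∉ F) :
    ∃ q m, IsPathOn (fun x y => (x, y) ∈ F) q m ∧ q 0 = x₀ ∧ ∀ y, (q m, y) ∉ F := by
  classical
  have : ∀ x, ∃ y, (∃ z, (x, z) ∈ F) → (x, y) ∈ F := fun x =>
    (em _).elim (fun ⟨z, hz⟩ => ⟨z, fun _ => hz⟩) fun h => ⟨x, fun h' => (h h').elim⟩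
  choose next hnext using this
  let q : ℕ → α := fun i => next^[i] x₀
  have hstep : ∀ i, (∃ y, (q i, y) ∈ F) → (q i, q (i + 1)) ∈ F := fun i h => by
    simpa [q, Function.iterate_succ_apply'] using hnext _ h
  have hpath : ∀ m, (∀ i < m, ∃ y, (q i, y) ∈ F) →
      IsPathOn (fun x y => (x, y) ∈ F) q m :=
    fun m h => IsWalkOn.isPathOn_of_forall_not_rel (fun _ _ _ => hF _ _ _)
      (fun i hi => hstep i (h i hi)) h₀
  have hex : ∃ m, ∀ y, (q m, y) ∉ F := by
    by_contra! h
    obtain ⟨i, hi, j, hj, hij, heq⟩ := exists_ne_map_eq_of_card_lt_of_maps_to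
      (s := range (#F + 1)) (by simp) (f := fun i => (q i, q (i + 1)))
      fun i _ => hstep i (h i)
    exact hij ((hpath (#F + 1) fun i _ => h i).2 i (by simp at hi; omega) j
      (by simp at hj; omega) (congrArg Prod.fst heq))
  exact ⟨q, Nat.find hex, hpath _ fun i hi => not_forall_not.mp (Nat.find_min hex hi), rfl,
    Nat.find_spec hex⟩

end MaximalPath

section FlowStructure

variable {α : Type} [DecidableEq α] {G : α → α → Prop} {s t : Set α}
  {F : Finset (α × α)}

theorem IsFlow.card_fst_mem_le [DecidablePred (· ∈ s)] (hF : IsFlow G s t F) {R : Set α}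
    [DecidablePred (· ∈ R)] (hR : Disjoint R t) :
    #{e ∈ F | e.1 ∈ R} ≤ #{e ∈ F | e.2 ∈ R} + flowValue s F := by
  set T := {x ∈ F.image Prod.fst ∪ F.image Prod.snd | x ∈ R}
  have hdeg : ∀ x ∈ T, outDeg F x ≤ inDeg F x + #{e ∈ {e ∈ F | e.1 ∈ s} | e.1 = x} := by
    intro x hx
    by_cases hxs : x ∈ s
    · rw [filter_filter, outDeg]
      exact le_add_left (card_le_card fun e he => by
        rw [mem_filter] at he ⊢; exact ⟨he.1, he.2 ▸ hxs, he.2⟩)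
    · exact (hF.conserve x hxs (hR.notMem_of_mem_left (mem_filter.mp hx).2)).le.trans
        le_self_add
  have hsum := sum_le_sum hdeg
  simp only [sum_add_distrib, outDeg, inDeg] at hsum
  rw [sum_card_fiberwise_eq_card_filter, sum_card_fiberwise_eq_card_filter,
    sum_card_fiberwise_eq_card_filter] at hsum
  have hT : ∀ e ∈ F, (e.1 ∈ T ↔ e.1 ∈ R) ∧ (e.2 ∈ T ↔ e.2 ∈ R) := fun e he => by
    simp only [T, mem_filter, mem_union, mem_image]
    exact ⟨and_iff_right (Or.inl ⟨e, he, rfl⟩), and_iff_right (Or.inr ⟨e, he, rfl⟩)⟩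
  rw [filter_congr fun e he => (hT e he).1, filter_congr fun e he => (hT e he).2] at hsum
  exact hsum.trans (add_le_add le_rfl (card_filter_le _ _))

/-- No flow enters the residual reach of the sources, so the flow leaving it is at most the
value. -/
theorem IsFlow.card_le_flowValue [DecidablePred (· ∈ s)] (hF : IsFlow G s t F)
    (ht : Disjoint (residualReach G s F) t) {L : Finset (α × α)}
    (hL : ∀ e ∈ L, e ∈ F ∧ e.1 ∈ residualReach G s F ∧ e.2 ∉ residualReach G s F) :
    #L ≤ flowValue s F := by
  classical
  set R := residualReach G s F
  have hout : #{e ∈ F | e.1 ∈ R} = #{e ∈ F | e.1 ∈ R ∧ e.2 ∈ R} +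
      #{e ∈ F | e.1 ∈ R ∧ e.2 ∉ R} := by
    rw [← card_union_of_disjoint (disjoint_filter.mpr fun _ _ h h' => h'.2 h.2), ← filter_or]
    exact congrArg card (filter_congr fun e _ => by tauto)
  have hin : #{e ∈ F | e.2 ∈ R} = #{e ∈ F | e.1 ∈ R ∧ e.2 ∈ R} :=
    congrArg card (filter_congr fun e he => ⟨fun ⟨a, ha, h⟩ =>
      ⟨⟨a, ha, h.tail (Or.inr he)⟩, ⟨a, ha, h⟩⟩, And.right⟩)
  have hL' : L ⊆ {e ∈ F | e.1 ∈ R ∧ e.2 ∉ R} := fun e he => mem_filter.mpr (hL e he)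
  have := hF.card_fst_mem_le ht
  have := card_le_card hL'
  omega

theorem IsFlow.exists_isPathOn_to_sink (hs : ∀ x y, G x y → y ∉ s) (hF : IsFlow G s t F)
    (hinj : ∀ x y z, (y, x) ∈ F → (z, x) ∈ F → y = z) {e : α × α} (he : e ∈ F)
    (he₁ : e.1 ∈ s) :
    ∃ q m, IsPathOn (fun x y => (x, y) ∈ F) q m ∧ q 0 = e.1 ∧ q m ∈ t := by
  obtain ⟨q, m, hq, hq0, hqm⟩ :=
    exists_maximal_isPathOn hinj fun y hy => hs _ _ (hF.isArc _ hy) he₁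
  refine ⟨q, m, hq, hq0, ?_⟩
  have hm : m ≠ 0 := by
    rintro rfl
    exact hqm e.2 (by simpa [hq0] using he)
  have hlast : (q (m - 1), q m) ∈ F := by
    simpa [Nat.sub_add_cancel (Nat.pos_of_ne_zero hm)] using hq.1 (m - 1) (by omega)
  have hout : outDeg F (q m) = 0 :=
    card_eq_zero.mpr (filter_eq_empty_iff.mpr fun e he h => hqm e.2 (by simpa [← h] using he))
  have hin : 0 < inDeg F (q m) := card_pos.mpr ⟨_, mem_filter.mpr ⟨hlast, rfl⟩⟩
  by_contra hqt
  have := hF.conserve (q m) (hs _ _ (hF.isArc _ hlast)) hqt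
  omega

end FlowStructure

section SplitDigraph

variable {W : Type} {Q : W → W → Prop} {A B : Set W}

/-- `(v, false)` and `(v, true)` are the entry and exit copies of `v`, joined by an arc, so
that arc-disjoint paths of the split digraph are vertex-disjoint paths of `Q`. -/
def splitArc (Q : W → W → Prop) (x y : W × Bool) : Prop :=
  (x.2 = false ∧ y = (x.1, true)) ∨ (x.2 = true ∧ y.2 = false ∧ Q x.1 y.1)

theorem splitArc_snd {x y : W × Bool} (h : splitArc Q x y) : y.2 = !x.2 := by
  rcases h with ⟨hx, rfl⟩ | ⟨hx, hy, -⟩ <;> simp [*]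

theorem splitArc_entry {v : W} {y : W × Bool} (h : splitArc Q (v, false) y) : y = (v, true) := by
  rcases h with ⟨-, rfl⟩ | ⟨h, -⟩
  · rfl
  · cases h

theorem splitArc_exit {v : W} {x : W × Bool} (h : splitArc Q x (v, true)) : x = (v, false) := by
  rcases h with ⟨hx, h⟩ | ⟨-, h, -⟩
  · rw [Prod.mk.injEq] at h
    exact Prod.ext h.1.symm hx
  · cases h

theorem splitArc_notMem_entries (hA : ∀ u v, Q u v → v ∉ A) {x y : W × Bool}
    (h : splitArc Q x y) : y ∉ A ×ˢ {false} := by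
  rcases h with ⟨-, rfl⟩ | ⟨-, -, h⟩
  · simp
  · exact fun hy => hA _ _ h hy.1

theorem splitArc_notMem_exits (hB : ∀ u v, Q u v → u ∉ B) {x y : W × Bool}
    (h : splitArc Q x y) : x ∉ B ×ˢ {true} := by
  rcases h with ⟨hx, -⟩ | ⟨-, -, h⟩
  · simp [hx]
  · exact fun hx => hB _ _ h hx.1

theorem IsWalkOn.splitArc_even {q : ℕ → W × Bool} {m : ℕ} (hq : IsWalkOn (splitArc Q) q m)
    (h0 : (q 0).2 = false) {s : ℕ} (hs : 2 * s ≤ m) : q (2 * s) = ((q (2 * s)).1, false) :=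
  Prod.ext rfl (by simpa [Nat.odd_iff] using hq.snd_eq_decide_odd (fun _ _ => splitArc_snd) h0 _ hs)

theorem IsWalkOn.splitArc_odd {q : ℕ → W × Bool} {m : ℕ} (hq : IsWalkOn (splitArc Q) q m)
    (h0 : (q 0).2 = false) {s : ℕ} (hs : 2 * s + 1 ≤ m) :
    q (2 * s + 1) = ((q (2 * s)).1, true) := by
  have h := hq (2 * s) (by omega)
  rw [hq.splitArc_even h0 (by omega)] at h
  exact splitArc_entry h

theorem IsPathOn.splitArc_proj {q : ℕ → W × Bool} {m : ℕ} (hq : IsPathOn (splitArc Q) q m)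
    (h0 : (q 0).2 = false) (hm : (q m).2 = true) :
    IsPathOn Q (fun s => (q (2 * s)).1) (m / 2) ∧ (q m).1 = (q (2 * (m / 2))).1 := by
  refine ⟨⟨fun s hs => ?_, fun s hs u hu h => ?_⟩, ?_⟩
  · have h := hq.1 (2 * s + 1) (by omega)
    rw [hq.1.splitArc_odd h0 (by omega)] at h
    rcases h with ⟨h, -⟩ | ⟨-, -, h⟩
    · cases h
    · simpa [Nat.mul_succ] using h
  · have := hq.2 (2 * s) (by omega) (2 * u) (by omega) (by
      rw [hq.1.splitArc_even h0 (by omega), hq.1.splitArc_even h0 (s := u) (by omega)]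
      exact congrArg (·, false) h)
    omega
  · have hodd : m % 2 = 1 := by
      have := hq.1.snd_eq_decide_odd (fun _ _ => splitArc_snd) h0 m le_rfl
      simpa [Nat.odd_iff, hm] using this.symm
    have := hq.1.splitArc_odd h0 (s := m / 2) (by omega)
    rw [show 2 * (m / 2) + 1 = m by omega] at this
    rw [this]

end SplitDigraph

def Separates {W : Type} (Q : W → W → Prop) (A B S : Set W) : Prop :=
  ∀ w n, IsWalkOn Q w n → w 0 ∈ A → w n ∈ B → ∃ i ≤ n, w i ∈ S

section SplitFlow

variable {W : Type} [DecidableEq W] {Q : W → W → Prop} {A B : Set W}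
  {F : Finset ((W × Bool) × (W × Bool))}

abbrev IsSplitFlow (Q : W → W → Prop) (A B : Set W) (F : Finset ((W × Bool) × (W × Bool))) :
    Prop :=
  IsFlow (splitArc Q) (A ×ˢ {false}) (B ×ˢ {true}) F

theorem IsSplitFlow.outDeg_entry_le_one (hF : IsSplitFlow Q A B F)
    (v : W) : outDeg F (v, false) ≤ 1 :=
  card_le_one.mpr fun e he e' he' => by
    rw [mem_filter] at he he'
    have h := splitArc_entry (he.2 ▸ hF.isArc e he.1)
    have h' := splitArc_entry (he'.2 ▸ hF.isArc e' he'.1)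
    exact Prod.ext (he.2.trans he'.2.symm) (h.trans h'.symm)

theorem IsSplitFlow.inDeg_exit_le_one (hF : IsSplitFlow Q A B F)
    (v : W) : inDeg F (v, true) ≤ 1 :=
  card_le_one.mpr fun e he e' he' => by
    rw [mem_filter] at he he'
    have h := splitArc_exit (he.2 ▸ hF.isArc e he.1)
    have h' := splitArc_exit (he'.2 ▸ hF.isArc e' he'.1)
    exact Prod.ext (h.trans h'.symm) (he.2.trans he'.2.symm)

theorem IsSplitFlow.inDeg_le_one (hA : ∀ u v, Q u v → v ∉ A)
    (hF : IsSplitFlow Q A B F) : ∀ x, inDeg F x ≤ 1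
  | (v, true) => hF.inDeg_exit_le_one v
  | (v, false) => by
    by_cases hv : (v, false) ∈ A ×ˢ {false}
    · have : inDeg F (v, false) = 0 := card_eq_zero.mpr <| filter_eq_empty_iff.mpr
        fun e he h => splitArc_notMem_entries hA (hF.isArc e he) (h ▸ hv)
      omega
    · exact (hF.conserve _ hv (by simp)) ▸ hF.outDeg_entry_le_one v

theorem IsSplitFlow.outDeg_le_one (hB : ∀ u v, Q u v → u ∉ B)
    (hF : IsSplitFlow Q A B F) : ∀ x, outDeg F x ≤ 1
  | (v, false) => hF.outDeg_entry_le_one v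
  | (v, true) => by
    by_cases hv : (v, true) ∈ B ×ˢ {true}
    · have : outDeg F (v, true) = 0 := card_eq_zero.mpr <| filter_eq_empty_iff.mpr
        fun e he h => splitArc_notMem_exits hB (hF.isArc e he) (h ▸ hv)
      omega
    · exact (hF.conserve _ (by simp) hv).symm ▸ hF.inDeg_exit_le_one v

theorem IsSplitFlow.eq_of_mem_of_mem_snd (hA : ∀ u v, Q u v → v ∉ A)
    (hF : IsSplitFlow Q A B F) {x y z : W × Bool}
    (hy : (y, x) ∈ F) (hz : (z, x) ∈ F) : y = z :=
  congrArg Prod.fst (card_le_one.mp (hF.inDeg_le_one hA x) _ (mem_filter.mpr ⟨hy, rfl⟩) _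
    (mem_filter.mpr ⟨hz, rfl⟩))

theorem IsSplitFlow.eq_of_mem_of_mem_fst (hB : ∀ u v, Q u v → u ∉ B)
    (hF : IsSplitFlow Q A B F) {x y z : W × Bool}
    (hy : (x, y) ∈ F) (hz : (x, z) ∈ F) : y = z :=
  congrArg Prod.snd (card_le_one.mp (hF.outDeg_le_one hB x) _ (mem_filter.mpr ⟨hy, rfl⟩) _
    (mem_filter.mpr ⟨hz, rfl⟩))

theorem IsSplitFlow.entry_mem_residualReach (hB : ∀ u v, Q u v → u ∉ B)
    (hF : IsSplitFlow Q A B F) {u v : W}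
    (hu : (u, true) ∈ residualReach (splitArc Q) (A ×ˢ {false}) F) (huv : Q u v) :
    (v, false) ∈ residualReach (splitArc Q) (A ×ˢ {false}) F := by
  obtain ⟨a, ha, h⟩ := hu
  by_cases harc : ((u, true), (v, false)) ∈ F
  swap
  · exact ⟨a, ha, h.tail (Or.inl ⟨Or.inr ⟨rfl, rfl, huv⟩, harc⟩)⟩
  rcases h.cases_tail with rfl | ⟨y, hy, hres⟩
  · simp at ha
  rcases hres with ⟨hyu, hyF⟩ | hyF
  · -- `(u, true)` was entered from `(u, false)` along an arc without flow, yet flow leaves it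
    rw [splitArc_exit hyu] at hyF
    have hin : inDeg F (u, true) = 0 := card_eq_zero.mpr <| filter_eq_empty_iff.mpr
      fun e he h => hyF (by rw [← splitArc_exit (h ▸ hF.isArc e he), ← h]; exact he)
    have hout : 0 < outDeg F (u, true) := card_pos.mpr ⟨_, mem_filter.mpr ⟨harc, rfl⟩⟩
    have := hF.conserve (u, true) (by simp) fun h => hB _ _ huv h.1
    omega
  · exact ⟨a, ha, hF.eq_of_mem_of_mem_fst hB hyF harc ▸ hy⟩

theorem IsSplitFlow.exists_separates [DecidablePred (· ∈ A)] (hB : ∀ u v, Q u v → u ∉ B)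
    (hF : IsSplitFlow Q A B F)
    (ht : Disjoint (residualReach (splitArc Q) (A ×ˢ {false}) F) (B ×ˢ {true})) :
    ∃ S : Finset W, #S ≤ flowValue (A ×ˢ {false}) F ∧ Separates Q A B S := by
  classical
  set R := residualReach (splitArc Q) (A ×ˢ {false}) F
  set L := {e ∈ F | e.1 ∈ R ∧ e.2 ∉ R}
  refine ⟨L.image (·.1.1),
    card_image_le.trans (hF.card_le_flowValue ht fun e he => mem_filter.mp he), ?_⟩
  intro w n hw h0 hn
  by_contra! hS
  have hexit : ∀ i ≤ n, (w i, false) ∈ R → (w i, true) ∈ R := by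
    intro i hi h
    by_contra h'
    by_cases harc : ((w i, false), (w i, true)) ∈ F
    · exact hS i hi (mem_image.mpr ⟨_, mem_filter.mpr ⟨harc, h, h'⟩, rfl⟩)
    · obtain ⟨a, ha, hr⟩ := h
      exact h' ⟨a, ha, hr.tail (Or.inl ⟨Or.inl ⟨rfl, rfl⟩, harc⟩)⟩
  have hentry : ∀ i ≤ n, (w i, false) ∈ R := by
    intro i hi
    induction i with
    | zero => exact ⟨(w 0, false), ⟨h0, Set.mem_singleton _⟩, .refl⟩
    | succ i ih =>
      exact hF.entry_mem_residualReach hB (hexit i (by omega) (ih (by omega))) (hw i (by omega))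
  exact ht.notMem_of_mem_left (hexit n le_rfl (hentry n le_rfl)) ⟨hn, rfl⟩

/-- In-degrees of a split flow are at most one and entry copies of sources have none, so flow
paths through the same vertex of `W` come from the same source. -/
theorem IsSplitFlow.apply_zero_eq_of_fst_eq (hA : ∀ u v, Q u v → v ∉ A)
    (hF : IsSplitFlow Q A B F) {q q' : ℕ → W × Bool} {m m' s u : ℕ}
    (hq : IsWalkOn (fun x y => (x, y) ∈ F) q m) (hq' : IsWalkOn (fun x y => (x, y) ∈ F) q' m')
    (h₀ : q 0 ∈ A ×ˢ {false}) (h₀' : q' 0 ∈ A ×ˢ {false}) (hs : 2 * s ≤ m)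
    (hu : 2 * u ≤ m')
    (h : (q (2 * s)).1 = (q' (2 * u)).1) : q 0 = q' 0 := by
  have hsrc : ∀ x ∈ A ×ˢ {false}, ∀ y, (y, x) ∉ F :=
    fun _ hx _ hy => splitArc_notMem_entries hA (hF.isArc _ hy) hx
  refine (hq.eq_of_apply_eq (r := fun x y => (x, y) ∈ F)
    (fun _ _ _ => hF.eq_of_mem_of_mem_snd hA) hq' (hsrc _ h₀) (hsrc _ h₀') hs hu ?_).2
  rw [(hF.isWalkOn hq).splitArc_even h₀.2 hs, (hF.isWalkOn hq').splitArc_even h₀'.2 hu, h]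

theorem IsSplitFlow.exLinkage [DecidablePred (· ∈ A)] (hA : ∀ u v, Q u v → v ∉ A)
    (hB : ∀ u v, Q u v → u ∉ B) (hF : IsSplitFlow Q A B F) :
    ExLinkage Q A B ∅ (flowValue (A ×ˢ {false}) F) := by
  set E := {e ∈ F | e.1 ∈ A ×ˢ {false}}
  have hpath : ∀ e : E, ∃ q m, IsPathOn (fun x y => (x, y) ∈ F) q m ∧ q 0 = e.1.1 ∧
      q m ∈ B ×ˢ {true} := fun e =>
    hF.exists_isPathOn_to_sink (fun _ _ => splitArc_notMem_entries hA)
      (fun _ _ _ => hF.eq_of_mem_of_mem_snd hA) (mem_filter.mp e.2).1 (mem_filter.mp e.2).2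
  choose q m hq hq0 hqm using hpath
  have hstart : ∀ e : E, q e 0 ∈ A ×ˢ {false} := fun e => hq0 e ▸ (mem_filter.mp e.2).2
  have hproj := fun e =>
    IsPathOn.splitArc_proj ⟨hF.isWalkOn (hq e).1, (hq e).2⟩ (hstart e).2 (hqm e).2
  let φ : Fin #E ≃ E := E.equivFin.symm
  refine ⟨fun i s => (q (φ i) (2 * s)).1, fun i => m (φ i) / 2,
    fun i => ⟨(hproj (φ i)).1, (hstart (φ i)).1, ?_, Set.disjoint_empty _⟩,
    fun i j hij => Set.disjoint_left.mpr ?_⟩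
  · show (q (φ i) (2 * (m (φ i) / 2))).1 ∈ B
    exact (hproj (φ i)).2 ▸ (hqm (φ i)).1
  rintro v ⟨s, hs, rfl⟩ ⟨u, hu, huv⟩
  dsimp only at hs hu huv
  have h0 := hF.apply_zero_eq_of_fst_eq hA (hq (φ i)).1 (hq (φ j)).1 (hstart _) (hstart _)
    (by omega) (by omega) huv.symm
  rw [hq0, hq0] at h0
  have h1 := hF.eq_of_mem_of_mem_fst hB (x := (φ i).1.1) (y := (φ i).1.2) (z := (φ j).1.2)
    (mem_filter.mp (φ i).2).1 (by rw [h0]; exact (mem_filter.mp (φ j).2).1)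
  exact hij (φ.injective (Subtype.ext (Prod.ext h0 h1)))

theorem IsSplitFlow.augment_or_separates [DecidablePred (· ∈ A)]
    (hA : ∀ u v, Q u v → v ∉ A) (hB : ∀ u v, Q u v → u ∉ B) (hF : IsSplitFlow Q A B F) :
    (∃ F', IsSplitFlow Q A B F' ∧
      flowValue (A ×ˢ {false}) F' = flowValue (A ×ˢ {false}) F + 1) ∨
    ∃ S : Finset W, #S ≤ flowValue (A ×ˢ {false}) F ∧ Separates Q A B S := by
  by_cases ht : Disjoint (residualReach (splitArc Q) (A ×ˢ {false}) F) (B ×ˢ {true})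
  · exact Or.inr (hF.exists_separates hB ht)
  obtain ⟨x, ⟨a, ha, hax⟩, hx⟩ := Set.not_disjoint_iff.mp ht
  obtain ⟨w, n, hw, hw0, hwn⟩ := exists_isWalkOn_of_reflTransGen hax
  obtain ⟨p, m, hp, hp0, hpm, hint⟩ := hw.exists_isPathOn (hw0 ▸ ha) (hwn ▸ hx)
  exact Or.inl ⟨_, hF.augment hp hp0 hpm, flowValue_augmentAlong
    (fun _ _ => splitArc_notMem_entries hA) (Set.disjoint_prod.mpr (Or.inr (by simp)))
    hF hp hp0 hpm hint⟩

end SplitFlow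

theorem menger {W : Type} {Q : W → W → Prop} {A B : Set W} (hA : ∀ u v, Q u v → v ∉ A)
    (hB : ∀ u v, Q u v → u ∉ B) (ℓ : ℕ) :
    ExLinkage Q A B ∅ ℓ ∨ ∃ S : Finset W, #S < ℓ ∧ Separates Q A B S := by
  classical
  have key : ∀ k, (∃ F, IsSplitFlow Q A B F ∧
      flowValue (A ×ˢ {false}) F = k) ∨ ∃ S : Finset W, #S < k ∧ Separates Q A B S := by
    intro k
    induction k with
    | zero => exact Or.inl ⟨∅, ⟨by simp, by simp [outDeg, inDeg]⟩, by simp [flowValue]⟩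
    | succ k ih =>
      rcases ih with ⟨F, hF, rfl⟩ | ⟨S, hS, hsep⟩
      · rcases hF.augment_or_separates hA hB with ⟨F', hF', hval⟩ | ⟨S, hS, hsep⟩
        · exact Or.inl ⟨F', hF', hval⟩
        · exact Or.inr ⟨S, Nat.lt_succ_of_le hS, hsep⟩
      · exact Or.inr ⟨S, hS.trans (Nat.lt_succ_self k), hsep⟩
  rcases key ℓ with ⟨F, hF, rfl⟩ | h
  · exact Or.inl (hF.exLinkage hA hB)
  · exact Or.inr h

section OddCover

variable {R : V → V → Prop} {X : Set V} {x y : V × Bool}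

/-- The second coordinate records the parity of the position in the walk, and only vertices
outside `X` can be left from the odd layer or entered into the even one. -/
def oddCover (R : V → V → Prop) (X : Set V) (x y : V × Bool) : Prop :=
  (x.2 = false ∧ y.2 = true ∧ R x.1 y.1) ∨
    (x.2 = true ∧ y.2 = false ∧ R x.1 y.1 ∧ x.1 ∉ X ∧ y.1 ∉ X)

theorem oddCover_snd (h : oddCover R X x y) : y.2 = !x.2 := by
  rcases h with ⟨hx, hy, -⟩ | ⟨hx, hy, -⟩ <;> simp [hx, hy]

theorem oddCover_notMem_entries (h : oddCover R X x y) : y ∉ X ×ˢ {false} := by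
  rcases h with ⟨-, hy, -⟩ | ⟨-, -, -, -, hy⟩
  · simp [hy]
  · exact fun h => hy h.1

theorem oddCover_notMem_exits (h : oddCover R X x y) : x ∉ X ×ˢ {true} := by
  rcases h with ⟨hx, -, -⟩ | ⟨-, -, -, hx, -⟩
  · simp [hx]
  · exact fun h => hx h.1

theorem IsXWalk.isWalkOn_oddCover {w : ℕ → V} {n : ℕ} (hw : IsXWalk R X w n) (hn : Odd n) :
    IsWalkOn (oddCover R X) (fun j => (w j, decide (Odd j))) n := by
  intro j hj
  by_cases hj' : Odd j
  · have hj1 : j + 1 < n := by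
      obtain ⟨a, rfl⟩ := hn
      obtain ⟨b, rfl⟩ := hj'
      omega
    exact Or.inr ⟨by simpa using hj', by simpa [Nat.odd_add_one] using hj', hw.1 j hj,
      hw.2.2.2 j hj'.pos hj, hw.2.2.2 (j + 1) (by omega) hj1⟩
  · exact Or.inl ⟨by simpa using hj', by simpa [Nat.odd_add_one] using hj', hw.1 j hj⟩

theorem isXWalk_of_isWalkOn_oddCover {p : ℕ → V × Bool} {n : ℕ}
    (hp : IsWalkOn (oddCover R X) p n) (h0 : p 0 ∈ X ×ˢ {false}) (hn : p n ∈ X ×ˢ {true}) :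
    IsXWalk R X (fun j => (p j).1) n ∧ Odd n := by
  have hpar := hp.snd_eq_decide_odd (fun _ _ => oddCover_snd) h0.2
  refine ⟨⟨fun j hj => ?_, h0.1, hn.1, fun j hj0 hjn hjX => ?_⟩, by
    simpa using (hpar n le_rfl).symm.trans hn.2⟩
  · rcases hp j hj with ⟨-, -, h⟩ | ⟨-, -, h, -⟩ <;> exact h
  · cases hj : (p j).2
    · rcases hp (j - 1) (by omega) with ⟨-, h, -⟩ | ⟨-, -, -, -, h⟩
      · simp [show j - 1 + 1 = j by omega, hj] at h
      · exact h (by simpa [show j - 1 + 1 = j by omega] using hjX)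
    · rcases hp j hjn with ⟨h, -, -⟩ | ⟨-, -, -, h, -⟩
      · simp [hj] at h
      · exact h hjX

end OddCover

theorem sum_ncard_visits_le_card {β : Type} {k : ℕ} {P : Fin k → ℕ → β} {len : Fin k → ℕ}
    (hinj : ∀ i, ∀ a ≤ len i, ∀ b ≤ len i, P i a = P i b → a = b)
    (hdisj : ∀ i j, i ≠ j → Disjoint (walkVerts (P i) (len i)) (walkVerts (P j) (len j)))
    (T : Finset β) : ∑ i, {j | j ≤ len i ∧ P i j ∈ T}.ncard ≤ #T := by
  classical
  have hcard : ∀ i,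
      {j | j ≤ len i ∧ P i j ∈ T}.ncard = #{x ∈ T | x ∈ walkVerts (P i) (len i)} := by
    intro i
    rw [← Set.ncard_coe_finset, ← Set.InjOn.ncard_image (f := P i)
      fun a ha b hb => hinj i a ha.1 b hb.1]
    congr 1
    ext x
    constructor
    · rintro ⟨j, ⟨hj, hjT⟩, rfl⟩
      exact mem_coe.mpr (mem_filter.mpr ⟨hjT, j, hj, rfl⟩)
    · intro hx
      obtain ⟨hxT, j, hj, rfl⟩ := mem_filter.mp (mem_coe.mp hx)
      exact ⟨j, ⟨hj, hxT⟩, rfl⟩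
  have hpd : Set.PairwiseDisjoint ↑(univ : Finset (Fin k))
      fun i => {x ∈ T | x ∈ walkVerts (P i) (len i)} := fun i _ j _ hij =>
    disjoint_filter.mpr fun x _ hi hj => (hdisj i j hij).ne_of_mem hi hj rfl
  simp only [hcard]
  rw [← card_biUnion hpd]
  exact card_le_card (biUnion_subset.mpr fun i _ => filter_subset _ _)

theorem odd_X_walks_half_integral_general (R : V → V → Prop) (X : Set V) (ℓ : ℕ) :
    (∃ (w : Fin ℓ → ℕ → V) (len : Fin ℓ → ℕ),
       (∀ i, IsXWalk R X (w i) (len i) ∧ Odd (len i)) ∧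
       (∀ v : V, (∑ i : Fin ℓ, ({j | j ≤ len i ∧ w i j = v} : Set ℕ).ncard) ≤ 2)) ∨
    (∃ Y : Set V, Y.Finite ∧ Y.ncard ≤ ℓ - 1 ∧
       ∀ (w : ℕ → V) (n : ℕ), IsXWalk R X w n → Odd n → ∃ i ≤ n, w i ∈ Y) := by
  classical
  rcases menger (A := X ×ˢ {false}) (B := X ×ˢ {true}) (fun _ _ => oddCover_notMem_entries)
    (fun _ _ => oddCover_notMem_exits) ℓ with ⟨P, len, hP, hdisj⟩ | ⟨S, hS, hsep⟩
  · refine Or.inl ⟨fun i j => (P i j).1, len,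
      fun i => isXWalk_of_isWalkOn_oddCover (hP i).1.1 (hP i).2.1 (hP i).2.2.1, fun v => ?_⟩
    have hfiber : ∀ i, {j | j ≤ len i ∧ (P i j).1 = v} =
        {j | j ≤ len i ∧ P i j ∈ ({(v, false), (v, true)} : Finset (V × Bool))} := by
      intro i
      ext j
      rcases h : P i j with ⟨a, _ | _⟩ <;> simp [h]
    simp only [hfiber]
    exact (sum_ncard_visits_le_card (fun i => (hP i).1.2) hdisj _).trans card_le_two
  · have hY : (Prod.fst '' (S : Set (V × Bool))).ncard ≤ ℓ - 1 :=
      (Set.ncard_image_le S.finite_toSet).trans (by rw [Set.ncard_coe_finset]; omega)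
    refine Or.inr ⟨Prod.fst '' (S : Set (V × Bool)), S.finite_toSet.image _, hY,
      fun w n hw hn => ?_⟩
    obtain ⟨i, hi, hiS⟩ := hsep _ n (hw.isWalkOn_oddCover hn) ⟨hw.2.1, rfl⟩
      ⟨hw.2.2.1, by simpa using hn⟩
    exact ⟨i, hi, _, hiS, rfl⟩

/-- Either there are ℓ directed odd X-walks using every vertex at most
twice in total (counting multiplicity), or a set of at most ℓ−1 vertices meets all
directed odd X-walks. -/
theorem odd_X_walks_half_integral (R : V → V → Prop) (X : Set V) (ℓ : ℕ)
    (hℓ : 0 < ℓ) :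
    (∃ (w : Fin ℓ → ℕ → V) (len : Fin ℓ → ℕ),
       (∀ i, IsXWalk R X (w i) (len i) ∧ Odd (len i)) ∧
       (∀ v : V, (∑ i : Fin ℓ, ({j | j ≤ len i ∧ w i j = v} : Set ℕ).ncard) ≤ 2)) ∨
    (∃ Y : Set V, Y.Finite ∧ Y.ncard ≤ ℓ - 1 ∧
       ∀ (w : ℕ → V) (n : ℕ), IsXWalk R X w n → Odd n → ∃ i ≤ n, w i ∈ Y) :=
  odd_X_walks_half_integral_general R X ℓ
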